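/- Let μ be a σ-finite measure on a measurable space Ω, let p, q : Ω → ℝ be nonnegative measurable functions with ∫ p dμ = 1 and ∫ q dμ = 1, and let P and Q be the probability measures with densities p and q with respect to μ. Assume p·log(p/(p+q)) and q·log(q/(p+q)) are μ-integrable (convention 0·log(0/0) = 0). Then the supremum, over all measurable D : Ω → (0,1) for which p·log D and q·log(1−D) are μ-integrable, of ∫ p·log D dμ + ∫ q·log(1−D) dμ equals −2·log 2 + 2·JSD(P, Q). -/

import Mathlib

open MeasureTheory ENNReal

/-- Kullback–Leibler divergence `KL(P ‖ M) = ∫ log (dP/dM) dP`. -/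
noncomputable def klDiv {Ω : Type*} [MeasurableSpace Ω] (P M : Measure Ω) : ℝ :=
  ∫ ω, Real.log ((P.rnDeriv M ω).toReal) ∂P

/-- Jensen–Shannon divergence
`JSD(P, Q) = (1/2) KL(P ‖ M) + (1/2) KL(Q ‖ M)` with `M = (1/2) • (P + Q)`. -/
noncomputable def jsd {Ω : Type*} [MeasurableSpace Ω] (P Q : Measure Ω) : ℝ :=
  (1 / 2) * klDiv P ((1 / 2 : ℝ≥0∞) • (P + Q)) +
  (1 / 2) * klDiv Q ((1 / 2 : ℝ≥0∞) • (P + Q))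

/-! The value `∫ p log D + ∫ q log (1 - D)` is maximised pointwise by the optimal discriminator
`D* = p / (p + q)` (Gibbs' inequality on two points), and since `dP/dM = 2p / (p + q)` its value
at `D*` is `-2 log 2 + 2 JSD(P, Q)`. As `D*` may take the values `0` and `1`, the supremum need
not be attained; it is approached by `(1 - t) D* + t / 2`, which takes values in
`[t / 2, 1 - t / 2]` and, by concavity of `log`, loses only `O(t)`. -/

open Filter Topology

lemma mul_log_le_mul_log_div_add_sub {a s c : ℝ} (ha : 0 ≤ a) (hs : 0 < s) (hc : 0 < c) :
    a * Real.log s ≤ a * Real.log (a / c) + (s * c - a) := by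
  rcases ha.eq_or_lt with rfl | ha
  · simpa using (mul_pos hs hc).le
  have hlog : Real.log (s * c / a) = Real.log s - Real.log (a / c) := by
    rw [Real.log_div (by positivity) ha.ne', Real.log_mul hs.ne' hc.ne',
      Real.log_div ha.ne' hc.ne']
    ring
  have key : a * Real.log (s * c / a) ≤ a * (s * c / a - 1) :=
    mul_le_mul_of_nonneg_left (Real.log_le_sub_one_of_pos (by positivity)) ha.le
  rw [hlog, mul_sub_one, mul_div_cancel₀ _ ha.ne'] at key
  linarith

lemma mul_log_add_mul_log_one_sub_le {a b t : ℝ} (ha : 0 ≤ a) (hb : 0 ≤ b) (ht0 : 0 < t)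
    (ht1 : t < 1) :
    a * Real.log t + b * Real.log (1 - t) ≤
      a * Real.log (a / (a + b)) + b * Real.log (b / (a + b)) := by
  rcases (add_nonneg ha hb).eq_or_lt with hab | hab
  · obtain ⟨rfl, rfl⟩ : a = 0 ∧ b = 0 := ⟨by linarith, by linarith⟩
    simp
  have hta := mul_log_le_mul_log_div_add_sub ha ht0 hab
  have htb := mul_log_le_mul_log_div_add_sub hb (sub_pos.2 ht1) hab
  linarith

lemma mul_log_mix_half_ge {a x t : ℝ} (ha : 0 ≤ a) (hx : 0 < a → 0 < x) (ht0 : 0 ≤ t)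
    (ht1 : t ≤ 1) :
    a * ((1 - t) * Real.log x - t * Real.log 2) ≤ a * Real.log ((1 - t) * x + t / 2) := by
  rcases ha.eq_or_lt with rfl | ha
  · simp
  have hconc := strictConcaveOn_log_Ioi.concaveOn.2 (Set.mem_Ioi.2 (hx ha))
    (Set.mem_Ioi.2 one_half_pos) (sub_nonneg.2 ht1) ht0 (by ring)
  rw [smul_eq_mul, smul_eq_mul, smul_eq_mul, smul_eq_mul, one_div, Real.log_inv] at hconc
  refine mul_le_mul_of_nonneg_left ?_ ha.le
  convert hconc using 2 <;> ring

lemma mix_half_mem_Icc {x t : ℝ} (hx0 : 0 ≤ x) (hx1 : x ≤ 1) (ht1 : t ≤ 1) :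
    (1 - t) * x + t / 2 ∈ Set.Icc (t / 2) (1 - t / 2) :=
  ⟨by nlinarith, by nlinarith⟩

lemma mul_log_one_sub_div_add {a b : ℝ} (ha : 0 ≤ a) (hb : 0 ≤ b) :
    b * Real.log (1 - a / (a + b)) = b * Real.log (b / (a + b)) := by
  rcases hb.eq_or_lt with rfl | hb
  · simp
  · rw [one_sub_div (by positivity), add_sub_cancel_left]

section

variable {Ω : Type*} [MeasurableSpace Ω] {μ : Measure Ω}

lemma integrable_mul_log_of_le {f D : Ω → ℝ} {c : ℝ} (hf : Integrable f μ) (hD : Measurable D)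
    (hc : 0 < c) (hcD : ∀ ω, c ≤ D ω) (hD1 : ∀ ω, D ω ≤ 1) :
    Integrable (fun ω => f ω * Real.log (D ω)) μ := by
  have hbound : ∀ ω, ‖Real.log (D ω)‖ ≤ -Real.log c := fun ω => by
    rw [Real.norm_eq_abs, abs_of_nonpos (Real.log_nonpos (hc.trans_le (hcD ω)).le (hD1 ω)),
      neg_le_neg_iff]
    exact Real.log_le_log hc (hcD ω)
  simpa only [mul_comm] using
    hf.bdd_mul hD.log.aestronglyMeasurable (Filter.Eventually.of_forall hbound)

lemma integrable_mul_log_mix_half {f g : Ω → ℝ} {t : ℝ} (hf : Integrable f μ)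
    (hg : Measurable g) (hg0 : ∀ ω, 0 ≤ g ω) (hg1 : ∀ ω, g ω ≤ 1) (ht0 : 0 < t) (ht1 : t ≤ 1) :
    Integrable (fun ω => f ω * Real.log ((1 - t) * g ω + t / 2)) μ :=
  integrable_mul_log_of_le hf (by fun_prop) (half_pos ht0)
    (fun ω => (mix_half_mem_Icc (hg0 ω) (hg1 ω) ht1).1)
    (fun ω => (mix_half_mem_Icc (hg0 ω) (hg1 ω) ht1).2.trans (by linarith))

lemma integral_mul_log_mix_half_ge {f g : Ω → ℝ} {t : ℝ} (hf0 : ∀ ω, 0 ≤ f ω)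
    (hf : Integrable f μ) (hg : Measurable g) (hg0 : ∀ ω, 0 ≤ g ω) (hg1 : ∀ ω, g ω ≤ 1)
    (hfg : ∀ ω, 0 < f ω → 0 < g ω) (hflog : Integrable (fun ω => f ω * Real.log (g ω)) μ)
    (ht0 : 0 < t) (ht1 : t ≤ 1) :
    (1 - t) * ∫ ω, f ω * Real.log (g ω) ∂μ - t * Real.log 2 * ∫ ω, f ω ∂μ ≤
      ∫ ω, f ω * Real.log ((1 - t) * g ω + t / 2) ∂μ := by
  rw [← integral_const_mul, ← integral_const_mul, ← integral_sub (hflog.const_mul _)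
    (hf.const_mul _)]
  refine integral_mono ((hflog.const_mul _).sub (hf.const_mul _))
    (integrable_mul_log_mix_half hf hg hg0 hg1 ht0 ht1) fun ω => ?_
  have := mul_log_mix_half_ge (hf0 ω) (hfg ω) ht0.le ht1
  linarith

lemma klDiv_withDensity_eq_integral (M : Measure Ω) [SigmaFinite M] {h : Ω → ℝ≥0∞}
    (hh : Measurable h) :
    klDiv (M.withDensity h) M = ∫ ω, Real.log (h ω).toReal ∂(M.withDensity h) := by
  refine integral_congr_ae ?_
  filter_upwards [(withDensity_absolutelyContinuous M h).ae_le
    (Measure.rnDeriv_withDensity M hh)] with ω hω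
  rw [hω]

lemma half_smul_add_withDensity_ofReal {p q : Ω → ℝ} (hpm : Measurable p)
    (hp0 : ∀ ω, 0 ≤ p ω) (hq0 : ∀ ω, 0 ≤ q ω) :
    (1 / 2 : ℝ≥0∞) • (μ.withDensity (fun ω => ENNReal.ofReal (p ω)) +
        μ.withDensity fun ω => ENNReal.ofReal (q ω)) =
      μ.withDensity fun ω => ENNReal.ofReal ((p ω + q ω) / 2) := by
  rw [← withDensity_add_left hpm.ennreal_ofReal, ← withDensity_smul' _ _ (by simp)]
  congr 1 with ω
  rw [Pi.smul_apply, Pi.add_apply, smul_eq_mul, ← ENNReal.ofReal_add (hp0 ω) (hq0 ω),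
    ENNReal.ofReal_div_of_pos two_pos, ENNReal.ofReal_ofNat, one_div, ENNReal.div_eq_inv_mul]

lemma withDensity_ofReal_eq_withDensity_mixture {p q : Ω → ℝ} (hpm : Measurable p)
    (hqm : Measurable q) (hp0 : ∀ ω, 0 ≤ p ω) (hq0 : ∀ ω, 0 ≤ q ω) :
    μ.withDensity (fun ω => ENNReal.ofReal (p ω)) =
      (μ.withDensity fun ω => ENNReal.ofReal ((p ω + q ω) / 2)).withDensity
        fun ω => ENNReal.ofReal (2 * p ω / (p ω + q ω)) := by
  rw [← withDensity_mul _ (by fun_prop) (by fun_prop)]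
  congr 1 with ω
  have hpq := add_nonneg (hp0 ω) (hq0 ω)
  rw [Pi.mul_apply, ← ENNReal.ofReal_mul (by positivity)]
  congr 1
  rcases hpq.eq_or_lt with hpq | hpq
  · rw [show p ω = 0 by linarith [hp0 ω, hq0 ω]]
    simp
  · field_simp

lemma klDiv_withDensity_ofReal_half_smul_add [SigmaFinite μ] {p q : Ω → ℝ}
    (hpm : Measurable p) (hqm : Measurable q) (hp0 : ∀ ω, 0 ≤ p ω) (hq0 : ∀ ω, 0 ≤ q ω) :
    klDiv (μ.withDensity fun ω => ENNReal.ofReal (p ω))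
        ((1 / 2 : ℝ≥0∞) • (μ.withDensity (fun ω => ENNReal.ofReal (p ω)) +
          μ.withDensity fun ω => ENNReal.ofReal (q ω))) =
      ∫ ω, p ω * Real.log (2 * p ω / (p ω + q ω)) ∂μ := by
  have : SigmaFinite (μ.withDensity fun ω => ENNReal.ofReal ((p ω + q ω) / 2)) :=
    SigmaFinite.withDensity_of_ne_top' fun _ => ENNReal.ofReal_ne_top
  rw [half_smul_add_withDensity_ofReal hpm hp0 hq0,
    withDensity_ofReal_eq_withDensity_mixture hpm hqm hp0 hq0,
    klDiv_withDensity_eq_integral _ (by fun_prop),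
    ← withDensity_ofReal_eq_withDensity_mixture hpm hqm hp0 hq0,
    integral_withDensity_eq_integral_toReal_smul hpm.ennreal_ofReal
      (Eventually.of_forall fun _ => ENNReal.ofReal_lt_top)]
  refine integral_congr_ae (Eventually.of_forall fun ω => ?_)
  have hpq := add_nonneg (hp0 ω) (hq0 ω)
  simp only [ENNReal.toReal_ofReal (hp0 ω), ENNReal.toReal_ofReal
    (div_nonneg (mul_nonneg zero_le_two (hp0 ω)) hpq), smul_eq_mul]

lemma integral_mul_log_two_mul_div {p s : Ω → ℝ} (hp0 : ∀ ω, 0 ≤ p ω) (hps : ∀ ω, p ω ≤ s ω)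
    (hp : Integrable p μ) (hlog : Integrable (fun ω => p ω * Real.log (p ω / s ω)) μ) :
    ∫ ω, p ω * Real.log (2 * p ω / s ω) ∂μ =
      Real.log 2 * ∫ ω, p ω ∂μ + ∫ ω, p ω * Real.log (p ω / s ω) ∂μ := by
  rw [← integral_const_mul, ← integral_add (hp.const_mul _) hlog]
  congr 1 with ω
  rcases (hp0 ω).eq_or_lt with hp | hp
  · simp [← hp]
  · rw [mul_div_assoc, Real.log_mul two_ne_zero (div_pos hp (hp.trans_le (hps ω))).ne']
    ring

lemma two_mul_jsd_withDensity_ofReal [SigmaFinite μ] {p q : Ω → ℝ}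
    (hpm : Measurable p) (hqm : Measurable q) (hp0 : ∀ ω, 0 ≤ p ω) (hq0 : ∀ ω, 0 ≤ q ω)
    (hp1 : ∫ ω, p ω ∂μ = 1) (hq1 : ∫ ω, q ω ∂μ = 1)
    (hp : Integrable (fun ω => p ω * Real.log (p ω / (p ω + q ω))) μ)
    (hq : Integrable (fun ω => q ω * Real.log (q ω / (p ω + q ω))) μ) :
    2 * jsd (μ.withDensity fun ω => ENNReal.ofReal (p ω))
        (μ.withDensity fun ω => ENNReal.ofReal (q ω)) =
      2 * Real.log 2 + ∫ ω, p ω * Real.log (p ω / (p ω + q ω)) ∂μ +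
        ∫ ω, q ω * Real.log (q ω / (p ω + q ω)) ∂μ := by
  rw [jsd, klDiv_withDensity_ofReal_half_smul_add hpm hqm hp0 hq0, add_comm (μ.withDensity _),
    klDiv_withDensity_ofReal_half_smul_add hqm hpm hq0 hp0]
  simp only [add_comm (q _) (p _)]
  rw [integral_mul_log_two_mul_div hp0 (fun ω => le_add_of_nonneg_right (hq0 ω))
      (integrable_of_integral_eq_one hp1) hp,
    integral_mul_log_two_mul_div hq0 (fun ω => le_add_of_nonneg_left (hp0 ω))
      (integrable_of_integral_eq_one hq1) hq, hp1, hq1]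
  ring

lemma exists_discriminator_value_ge {p q : Ω → ℝ} (hpm : Measurable p) (hqm : Measurable q)
    (hp0 : ∀ ω, 0 ≤ p ω) (hq0 : ∀ ω, 0 ≤ q ω)
    (hp1 : ∫ ω, p ω ∂μ = 1) (hq1 : ∫ ω, q ω ∂μ = 1)
    (hp : Integrable (fun ω => p ω * Real.log (p ω / (p ω + q ω))) μ)
    (hq : Integrable (fun ω => q ω * Real.log (q ω / (p ω + q ω))) μ) {t : ℝ} (ht0 : 0 < t)
    (ht1 : t ≤ 1) :
    ∃ D : Ω → ℝ, Measurable D ∧ (∀ ω, 0 < D ω ∧ D ω < 1) ∧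
      Integrable (fun ω => p ω * Real.log (D ω)) μ ∧
      Integrable (fun ω => q ω * Real.log (1 - D ω)) μ ∧
      (1 - t) * (∫ ω, p ω * Real.log (p ω / (p ω + q ω)) ∂μ +
          ∫ ω, q ω * Real.log (q ω / (p ω + q ω)) ∂μ) - 2 * t * Real.log 2 ≤
        ∫ ω, p ω * Real.log (D ω) ∂μ + ∫ ω, q ω * Real.log (1 - D ω) ∂μ := by
  set r : Ω → ℝ := fun ω => p ω / (p ω + q ω)
  have hrm : Measurable r := hpm.div (hpm.add hqm)
  have hr0 (ω : Ω) : 0 ≤ r ω := div_nonneg (hp0 ω) (add_nonneg (hp0 ω) (hq0 ω))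
  have hr1 (ω : Ω) : r ω ≤ 1 := div_le_one_of_le₀ (le_add_of_nonneg_right (hq0 ω))
    (add_nonneg (hp0 ω) (hq0 ω))
  have hpr (ω : Ω) (h : 0 < p ω) : 0 < r ω := div_pos h (add_pos_of_pos_of_nonneg h (hq0 ω))
  have hqr (ω : Ω) (h : 0 < q ω) : 0 < 1 - r ω :=
    sub_pos.2 ((div_lt_one (add_pos_of_nonneg_of_pos (hp0 ω) h)).2 (lt_add_of_pos_right _ h))
  have hs0 (ω : Ω) : 0 ≤ 1 - r ω := sub_nonneg.2 (hr1 ω)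
  have hs1 (ω : Ω) : 1 - r ω ≤ 1 := sub_le_self _ (hr0 ω)
  have hqlog : (fun ω => q ω * Real.log (1 - r ω)) =
      fun ω => q ω * Real.log (q ω / (p ω + q ω)) :=
    funext fun ω => mul_log_one_sub_div_add (hp0 ω) (hq0 ω)
  have hD1 (ω : Ω) : 1 - ((1 - t) * r ω + t / 2) = (1 - t) * (1 - r ω) + t / 2 := by ring
  have hpint := integrable_of_integral_eq_one hp1
  have hqint := integrable_of_integral_eq_one hq1
  refine ⟨fun ω => (1 - t) * r ω + t / 2, by fun_prop, fun ω => ?_, ?_, ?_, ?_⟩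
  · have := mix_half_mem_Icc (hr0 ω) (hr1 ω) ht1
    exact ⟨by linarith [this.1], by linarith [this.2]⟩
  · exact integrable_mul_log_mix_half hpint hrm hr0 hr1 ht0 ht1
  · simp only [hD1]
    exact integrable_mul_log_mix_half hqint (hrm.const_sub 1) hs0 hs1 ht0 ht1
  · have hpD := integral_mul_log_mix_half_ge hp0 hpint hrm hr0 hr1 hpr hp ht0 ht1
    have hqD := integral_mul_log_mix_half_ge hq0 hqint (hrm.const_sub 1) hs0 hs1 hqr
      (hqlog ▸ hq) ht0 ht1
    rw [hqlog, hq1] at hqD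
    rw [hp1] at hpD
    simp only [hD1]
    linarith

end

theorem gan_sup_value_eq_jsd
    {Ω : Type*} [MeasurableSpace Ω] (μ : Measure Ω) [SigmaFinite μ]
    (p q : Ω → ℝ) (hpm : Measurable p) (hqm : Measurable q)
    (hp0 : ∀ ω, 0 ≤ p ω) (hq0 : ∀ ω, 0 ≤ q ω)
    (hp1 : ∫ ω, p ω ∂μ = 1) (hq1 : ∫ ω, q ω ∂μ = 1)
    (h3 : Integrable (fun ω => p ω * Real.log (p ω / (p ω + q ω))) μ)
    (h4 : Integrable (fun ω => q ω * Real.log (q ω / (p ω + q ω))) μ) :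
    IsLUB
      {r : ℝ | ∃ D : Ω → ℝ, Measurable D ∧ (∀ ω, 0 < D ω ∧ D ω < 1) ∧
        Integrable (fun ω => p ω * Real.log (D ω)) μ ∧
        Integrable (fun ω => q ω * Real.log (1 - D ω)) μ ∧
        r = ∫ ω, p ω * Real.log (D ω) ∂μ + ∫ ω, q ω * Real.log (1 - D ω) ∂μ}
      (-2 * Real.log 2 +
        2 * jsd (μ.withDensity fun ω => ENNReal.ofReal (p ω))
                (μ.withDensity fun ω => ENNReal.ofReal (q ω))) := by
  rw [two_mul_jsd_withDensity_ofReal hpm hqm hp0 hq0 hp1 hq1 h3 h4, add_assoc, neg_mul,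
    neg_add_cancel_left]
  refine ⟨?_, fun b hb => ?_⟩
  · rintro _ ⟨D, -, hD, hpD, hqD, rfl⟩
    rw [← integral_add hpD hqD, ← integral_add h3 h4]
    exact integral_mono (hpD.add hqD) (h3.add h4) fun ω =>
      mul_log_add_mul_log_one_sub_le (hp0 ω) (hq0 ω) (hD ω).1 (hD ω).2
  · set A := ∫ ω, p ω * Real.log (p ω / (p ω + q ω)) ∂μ
    set B := ∫ ω, q ω * Real.log (q ω / (p ω + q ω)) ∂μ
    have hlim : Tendsto (fun t : ℝ => (1 - t) * (A + B) - 2 * t * Real.log 2) (𝓝[>] 0)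
        (𝓝 (A + B)) := by
      refine (Continuous.tendsto' (by fun_prop) 0 _ ?_).mono_left nhdsWithin_le_nhds
      simp
    refine le_of_tendsto hlim ?_
    filter_upwards [Ioc_mem_nhdsGT one_pos] with t ⟨ht0, ht1⟩
    obtain ⟨D, hDm, hD, hpD, hqD, hle⟩ :=
      exists_discriminator_value_ge hpm hqm hp0 hq0 hp1 hq1 h3 h4 ht0 ht1
    exact hle.trans (hb ⟨D, hDm, hD, hpD, hqD, rfl⟩)
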